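/- arXiv:1906.06814 — 4 statements merged into one kernel-verified Lean document; each statement's English description precedes it below -/
import Mathlib

section
/- Let G be a connected bipartite simple graph on n vertices. Then the Wiener index of G satisfies W(G) ≥ (3n² − 4n)/4. -/
open Finset SimpleGraph

noncomputable section

/-- The Wiener index of a graph `G`: the sum of graph distances over all unordered pairs
of distinct vertices, i.e. half the sum over ordered pairs. -/
def wienerIndex {V : Type*} [Fintype V] (G : SimpleGraph V) : ℝ :=
  (∑ u : V, ∑ v : V, (G.dist u v : ℝ)) / 2

open Classical in
/-- The Harary index of a graph `G`: the sum of reciprocals of graph distances over all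
unordered pairs of distinct vertices, where pairs in different components contribute `0`. -/
def hararyIndex {V : Type*} [Fintype V] (G : SimpleGraph V) : ℝ :=
  (∑ u : V, ∑ v : V, if u ≠ v ∧ G.Reachable u v then ((G.dist u v : ℝ))⁻¹ else 0) / 2

/-- The distance matrix of a graph. -/
def distMatrix {V : Type*} [Fintype V] (G : SimpleGraph V) : Matrix V V ℝ :=
  fun u v => (G.dist u v : ℝ)

open Classical in
/-- The Harary (reciprocal distance) matrix of a graph. -/
def hararyMatrix {V : Type*} [Fintype V] (G : SimpleGraph V) : Matrix V V ℝ :=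
  fun u v => if u ≠ v ∧ G.Reachable u v then ((G.dist u v : ℝ))⁻¹ else 0

/-- The distance spectral radius: the largest eigenvalue of the distance matrix. -/
def distSpectralRadius {V : Type*} [Fintype V] [DecidableEq V] (G : SimpleGraph V) : ℝ :=
  sSup (spectrum ℝ (distMatrix G))

/-- The Harary spectral radius: the largest eigenvalue of the Harary matrix. -/
def hararySpectralRadius {V : Type*} [Fintype V] [DecidableEq V] (G : SimpleGraph V) : ℝ :=
  sSup (spectrum ℝ (hararyMatrix G))

/-- A graph on `n` vertices is pancyclic if it contains a cycle of every length `ℓ`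
with `3 ≤ ℓ ≤ n`. -/
def Pancyclic {V : Type*} [Fintype V] (G : SimpleGraph V) : Prop :=
  ∀ ℓ : ℕ, 3 ≤ ℓ → ℓ ≤ Fintype.card V → ∃ (v : V) (c : G.Walk v v), c.IsCycle ∧ c.length = ℓ

/-- A graph is bipartite iff it is 2-colorable. -/
def IsBipartite {V : Type*} (G : SimpleGraph V) : Prop := G.Colorable 2

/-- A graph is a complete bipartite graph if it is isomorphic to some `K_{a,b}`. -/
def IsCompleteBipartite {V : Type*} (G : SimpleGraph V) : Prop :=
  ∃ a b : ℕ, Nonempty (G ≃g completeBipartiteGraph (Fin a) (Fin b))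

/-- The join `G ∨ H` of two graphs: take disjoint copies of `G` and `H` and add all edges
between them. -/
def graphJoin {α β : Type*} (G : SimpleGraph α) (H : SimpleGraph β) : SimpleGraph (α ⊕ β) where
  Adj u v := match u, v with
    | Sum.inl u, Sum.inl v => G.Adj u v
    | Sum.inr u, Sum.inr v => H.Adj u v
    | Sum.inl _, Sum.inr _ => True
    | Sum.inr _, Sum.inl _ => True
  symm := ⟨fun u v => match u, v with
    | Sum.inl u, Sum.inl v => G.adj_symm
    | Sum.inr u, Sum.inr v => H.adj_symm
    | Sum.inl _, Sum.inr _ | Sum.inr _, Sum.inl _ => fun _ => trivial⟩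
  loopless := ⟨fun u => by cases u <;> simp⟩

/-- The family 𝒩𝒫 of exceptional graphs (on `n = Fintype.card V` vertices for the first one). -/
def InNPFamily {V : Type*} [Fintype V] (G : SimpleGraph V) : Prop :=
  Nonempty (G ≃g graphJoin (⊤ : SimpleGraph (Fin 2))
      ((⊤ : SimpleGraph (Fin (Fintype.card V - 4))) ⊕g (⊥ : SimpleGraph (Fin 2)))) ∨
  Nonempty (G ≃g graphJoin (⊤ : SimpleGraph (Fin 5)) (⊥ : SimpleGraph (Fin 6))) ∨
  Nonempty (G ≃g graphJoin (⊤ : SimpleGraph (Fin 3))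
      ((⊤ : SimpleGraph (Fin 2)) ⊕g (⊥ : SimpleGraph (Fin 3)))) ∨
  Nonempty (G ≃g graphJoin (⊤ : SimpleGraph (Fin 3))
      (completeBipartiteGraph (Fin 1) (Fin 4) ⊕g (⊥ : SimpleGraph (Fin 1)))) ∨
  Nonempty (G ≃g graphJoin (⊤ : SimpleGraph (Fin 3))
      (completeBipartiteGraph (Fin 1) (Fin 3) ⊕g (⊤ : SimpleGraph (Fin 2)))) ∨
  Nonempty (G ≃g graphJoin (graphJoin (⊤ : SimpleGraph (Fin 2)) (⊥ : SimpleGraph (Fin 2)))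
      (⊥ : SimpleGraph (Fin 5))) ∨
  Nonempty (G ≃g graphJoin (⊤ : SimpleGraph (Fin 4)) (⊥ : SimpleGraph (Fin 5))) ∨
  Nonempty (G ≃g graphJoin (completeBipartiteGraph (Fin 1) (Fin 2)) (⊥ : SimpleGraph (Fin 4))) ∨
  Nonempty (G ≃g graphJoin (⊤ : SimpleGraph (Fin 2))
      (completeBipartiteGraph (Fin 1) (Fin 3) ⊕g (⊥ : SimpleGraph (Fin 1)))) ∨
  Nonempty (G ≃g graphJoin (⊤ : SimpleGraph (Fin 3)) (⊥ : SimpleGraph (Fin 4)))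

/-!
In a connected graph properly coloured with `k` colours, two distinct vertices are at distance
at least `1`, and at least `2` when they share a colour (they are then non-adjacent). Summing over
ordered pairs gives `n² + Σᵢ cᵢ² ≤ Σ d(u, v) + 2n`, where the `cᵢ` are the colour class sizes,
and Cauchy–Schwarz gives `n² ≤ k Σᵢ cᵢ²`. For `k = 2` this is `3n² ≤ 4 W(G) + 4n`.
-/

theorem Finset.sum_card_fiber_eq_sum_sq {ι κ : Type*} [Fintype κ] [DecidableEq κ]
    (s : Finset ι) (g : ι → κ) :
    ∑ i ∈ s, #{j ∈ s | g j = g i} = ∑ k, #{i ∈ s | g i = k} ^ 2 := by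
  rw [← sum_fiberwise' s g fun k => #{j ∈ s | g j = k}]
  simp [sq]

theorem Finset.sq_card_le_card_mul_sum_card_fiber {ι κ : Type*} [Fintype κ] [DecidableEq κ]
    (s : Finset ι) (g : ι → κ) :
    #s ^ 2 ≤ Fintype.card κ * ∑ i ∈ s, #{j ∈ s | g j = g i} := by
  rw [sum_card_fiber_eq_sum_sq,
    card_eq_sum_card_fiberwise (t := (univ : Finset κ)) fun _ _ => mem_univ _]
  exact sq_sum_le_card_mul_sum_sq

namespace SimpleGraph

variable {V α : Type*} {G : SimpleGraph V}

theorem Coloring.two_le_dist (C : G.Coloring α) {u v : V} (huv : G.Reachable u v)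
    (hne : u ≠ v) (hC : C u = C v) : 2 ≤ G.dist u v := by
  have h0 := huv.pos_dist_of_ne hne
  have h1 : G.dist u v ≠ 1 := fun h => C.valid (dist_eq_one_iff_adj.mp h) hC
  omega

theorem Coloring.card_add_card_sameColor_le_sum_dist [Fintype V] [DecidableEq α]
    (hG : G.Connected) (C : G.Coloring α) (u : V) :
    Fintype.card V + #{v | C v = C u} ≤ ∑ v, G.dist u v + 2 := by
  classical
  have hpair (v : V) :
      1 + (if C v = C u then 1 else 0) ≤ G.dist u v + if u = v then 2 else 0 := by
    rcases eq_or_ne u v with rfl | hne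
    · simp
    · by_cases hC : C v = C u
      · simpa [hC, hne] using C.two_le_dist (hG u v) hne hC.symm
      · simpa [hC, hne] using Nat.one_le_of_lt ((hG u v).pos_dist_of_ne hne)
  calc Fintype.card V + #{v | C v = C u}
      = ∑ v, (1 + if C v = C u then 1 else 0) := by
        rw [sum_add_distrib, sum_boole]; simp
    _ ≤ ∑ v, (G.dist u v + if u = v then 2 else 0) := sum_le_sum fun v _ => hpair v
    _ = ∑ v, G.dist u v + 2 := by rw [sum_add_distrib, sum_ite_eq]; simp

theorem Connected.card_add_one_mul_sq_card_le [Fintype V] [Fintype α] (hG : G.Connected)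
    (C : G.Coloring α) :
    (Fintype.card α + 1) * Fintype.card V ^ 2 ≤
      Fintype.card α * (∑ u, ∑ v, G.dist u v + 2 * Fintype.card V) := by
  classical
  have hpairs := sum_le_sum fun u (_ : u ∈ univ) => C.card_add_card_sameColor_le_sum_dist hG u
  have hclasses := sq_card_le_card_mul_sum_card_fiber univ C
  simp only [sum_add_distrib, sum_const, card_univ, smul_eq_mul] at hpairs hclasses
  nlinarith [Nat.mul_le_mul_left (Fintype.card α) hpairs]

end SimpleGraph

/-- For a connected bipartite simple graph `G` on `n` vertices,
`W(G) ≥ (3n² − 4n)/4`. -/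
theorem wiener_ge_of_bipartite {V : Type*} [Fintype V] (G : SimpleGraph V) (n : ℕ)
    (hn : Fintype.card V = n) (hconn : G.Connected) (hbip : _root_.IsBipartite G) :
    wienerIndex G ≥ (3 * (n : ℝ) ^ 2 - 4 * n) / 4 := by
  obtain ⟨C⟩ := hbip
  have h := hconn.card_add_one_mul_sq_card_le C
  rw [Fintype.card_fin, hn] at h
  have h' : 3 * (n : ℝ) ^ 2 ≤ 2 * (∑ u, ∑ v, (G.dist u v : ℝ) + 2 * n) := by exact_mod_cast h
  rw [wienerIndex]
  linarith
end
end

section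
/- Let G be a connected bipartite simple graph on n vertices. Then the Harary index of G satisfies H(G) ≤ (3n² − 2n)/8. -/
open Finset SimpleGraph

noncomputable section

/-!
Every pair of distinct vertices at distance at least 2 contributes at most `1/2`, and adjacent
pairs contribute `1`, so `H(G) ≤ (C(n,2) + m) / 2` for any graph with `m` edges. A bipartite graph
is triangle-free, so Mantel's theorem (Turán for `K₃`) gives `4m ≤ n²`.
-/

namespace SimpleGraph

variable {V : Type*} [Fintype V] {G : SimpleGraph V}

theorem CliqueFree.four_mul_card_edgeFinset_le [DecidableRel G.Adj] (h : G.CliqueFree 3) :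
    4 * #G.edgeFinset ≤ Fintype.card V ^ 2 := by
  have turan := CliqueFree.card_edgeFinset_le (r := 2) h
  simp only [Nat.choose_eq_zero_of_lt (Nat.mod_lt _ two_pos), add_zero, Nat.add_one_sub_one,
    mul_one] at turan
  grw [turan, Nat.mul_div_le]
  exact Nat.sub_le _ _

theorem hararyMatrix_le [DecidableEq V] [DecidableRel G.Adj] (u v : V) :
    hararyMatrix G u v ≤ (if u ≠ v then 1 / 2 else 0) + (if G.Adj u v then 1 / 2 else 0) := by
  unfold hararyMatrix
  split_ifs with huv hne hadj hadj
  · norm_num [dist_eq_one_iff_adj.mpr hadj]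
  · have two_le_dist : 2 ≤ G.dist u v := by
      have := dist_ne_zero_iff_ne_and_reachable.mpr huv
      have := mt dist_eq_one_iff_adj.mp hadj
      omega
    rw [add_zero, inv_le_comm₀ (by positivity) (by norm_num)]
    norm_num
    exact_mod_cast two_le_dist
  · exact absurd huv.1 hne
  · exact absurd huv.1 hne
  all_goals positivity

theorem hararyIndex_le_choose_two_add_card_edgeFinset [DecidableRel G.Adj] :
    hararyIndex G ≤ ((Fintype.card V).choose 2 + #G.edgeFinset) / 2 := by
  classical
  have card_ne (u : V) : (#{v | u ≠ v} : ℝ) = Fintype.card V - 1 := by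
    rw [filter_ne, card_erase_of_mem (mem_univ u), card_univ,
      Nat.cast_pred (Fintype.card_pos_iff.2 ⟨u⟩)]
  have sum_ne : ∑ u : V, ∑ v : V, (if u ≠ v then (1 / 2 : ℝ) else 0) =
      (Fintype.card V).choose 2 := by
    simp only [ne_eq, one_div, ite_not, sum_ite, sum_const_zero, sum_const, nsmul_eq_mul,
      card_ne, zero_add, card_univ, Nat.cast_choose_two]
    ring
  have sum_adj : ∑ u : V, ∑ v : V, (if G.Adj u v then (1 / 2 : ℝ) else 0) = #G.edgeFinset := by
    simp only [sum_ite, sum_const_zero, add_zero, sum_const, ← neighborFinset_eq_filter,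
      card_neighborFinset_eq_degree, nsmul_eq_mul, ← sum_mul, ← Nat.cast_sum,
      sum_degrees_eq_twice_card_edges]
    push_cast
    ring
  calc hararyIndex G = (∑ u, ∑ v, hararyMatrix G u v) / 2 := rfl
    _ ≤ (∑ u, ∑ v, ((if u ≠ v then 1 / 2 else 0) + (if G.Adj u v then 1 / 2 else 0))) / 2 := by
      gcongr with u _ v _
      exact hararyMatrix_le u v
    _ = _ := by simp only [sum_add_distrib, sum_ne, sum_adj]

end SimpleGraph

theorem harary_le_of_bipartite_general {V : Type*} [Fintype V] (G : SimpleGraph V) (n : ℕ)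
    (hn : Fintype.card V = n) (hbip : _root_.IsBipartite G) :
    hararyIndex G ≤ (3 * (n : ℝ) ^ 2 - 2 * n) / 8 := by
  classical
  subst hn
  have mantel : (4 * #G.edgeFinset : ℝ) ≤ Fintype.card V ^ 2 := by
    exact_mod_cast (hbip.cliqueFree (by norm_num)).four_mul_card_edgeFinset_le
  calc hararyIndex G ≤ ((Fintype.card V).choose 2 + #G.edgeFinset) / 2 :=
        hararyIndex_le_choose_two_add_card_edgeFinset
    _ ≤ _ := by
      rw [Nat.cast_choose_two]
      linarith

/-- For a connected bipartite simple graph `G` on `n` vertices,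
`H(G) ≤ (3n² − 2n)/8`. -/
theorem harary_le_of_bipartite {V : Type*} [Fintype V] (G : SimpleGraph V) (n : ℕ)
    (hn : Fintype.card V = n) (hconn : G.Connected) (hbip : _root_.IsBipartite G) :
    hararyIndex G ≤ (3 * (n : ℝ) ^ 2 - 2 * n) / 8 :=
  harary_le_of_bipartite_general G n hn hbip
end
end

section
/- For every n ≥ 5, the distance spectral radius of the graph K₂∨(K_{n−4}+2K₁) satisfies ρ(K₂∨(K_{n−4}+2K₁)) > n + 3 − 14/n. -/
open Finset SimpleGraph

noncomputable section

/-! The distance matrix is symmetric, so its largest eigenvalue bounds every Rayleigh quotient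
`xᵀDx / xᵀx`. With `m = n - 4`, take `x` equal to `1` on `K₂` and `K_m` and to `5/4` on the two
isolated vertices, whose rows of `D` are the heaviest. All distances are `1` or `2`, which gives
`xᵀDx = m² + 13m + 73/4` and `xᵀx = m + 41/8`; the quotient exceeds `n + 3 - 14/n` by
`(7m² - m + 10) / (8n(m + 41/8)) > 0`. -/

open Matrix

namespace Matrix.IsHermitian

theorem dotProduct_mulVec_le_sSup_spectrum_mul {n : Type*} [Fintype n] [DecidableEq n]
    {A : Matrix n n ℝ} (hA : A.IsHermitian) (x : n → ℝ) :
    x ⬝ᵥ A *ᵥ x ≤ sSup (spectrum ℝ A) * (x ⬝ᵥ x) := by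
  set c := sSup (spectrum ℝ A)
  have hpsd : (algebraMap ℝ (Matrix n n ℝ) c - A).PosSemidef := by
    refine Matrix.posSemidef_iff_isHermitian_and_spectrum_nonneg.mpr
      ⟨(isHermitian_diagonal _).sub hA, ?_⟩
    rw [← spectrum.singleton_sub_eq]
    rintro _ ⟨_, rfl, μ, hμ, rfl⟩
    exact sub_nonneg.mpr (le_csSup Matrix.finite_real_spectrum.bddAbove hμ)
  have := hpsd.dotProduct_mulVec_nonneg x
  simp only [Algebra.algebraMap_eq_smul_one, sub_mulVec, smul_mulVec, one_mulVec, dotProduct_sub,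
    dotProduct_smul, smul_eq_mul, sub_nonneg, star_trivial] at this
  linarith

end Matrix.IsHermitian

namespace SimpleGraph

variable {V : Type*} {G : SimpleGraph V}

theorem dist_eq_two {u v w : V} (hne : u ≠ v) (hnadj : ¬G.Adj u v) (huw : G.Adj u w)
    (hwv : G.Adj w v) : G.dist u v = 2 := by
  rw [dist, edist_eq_two_iff.mpr ⟨hne, hnadj, w, huw, hwv.symm⟩]
  rfl

theorem dist_eq_ite_of_adj_of_adj [DecidableEq V] [DecidableRel G.Adj] {u v w : V}
    (huw : G.Adj u w) (hwv : G.Adj w v) :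
    G.dist u v = if u = v then 0 else if G.Adj u v then 1 else 2 := by
  split_ifs with hne hadj
  · simp [*]
  · exact dist_eq_one_iff_adj.mpr hadj
  · exact dist_eq_two hne hadj huw hwv

end SimpleGraph

theorem isHermitian_distMatrix {V : Type*} [Fintype V] (G : SimpleGraph V) :
    (distMatrix G).IsHermitian := by
  ext u v
  simp [distMatrix, SimpleGraph.dist_comm]

section graphJoin

variable {α β : Type*} (G : SimpleGraph α) (H : SimpleGraph β)

@[simp]
theorem graphJoin_adj_inl_inl (a a' : α) :
    (graphJoin G H).Adj (.inl a) (.inl a') ↔ G.Adj a a' := Iff.rfl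

@[simp]
theorem graphJoin_adj_inr_inr (b b' : β) :
    (graphJoin G H).Adj (.inr b) (.inr b') ↔ H.Adj b b' := Iff.rfl

@[simp]
theorem graphJoin_adj_inl_inr (a : α) (b : β) : (graphJoin G H).Adj (.inl a) (.inr b) := trivial

@[simp]
theorem graphJoin_adj_inr_inl (a : α) (b : β) : (graphJoin G H).Adj (.inr b) (.inl a) := trivial

@[simp]
theorem graphJoin_dist_inl_inr (a : α) (b : β) : (graphJoin G H).dist (.inl a) (.inr b) = 1 :=
  SimpleGraph.dist_eq_one_iff_adj.mpr trivial

@[simp]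
theorem graphJoin_dist_inr_inl (a : α) (b : β) : (graphJoin G H).dist (.inr b) (.inl a) = 1 :=
  SimpleGraph.dist_eq_one_iff_adj.mpr trivial

open Classical in
theorem graphJoin_dist_inl_inl [Nonempty β] (a a' : α) :
    (graphJoin G H).dist (.inl a) (.inl a') =
      if a = a' then 0 else if G.Adj a a' then 1 else 2 := by
  let b : β := Classical.arbitrary β
  simpa using SimpleGraph.dist_eq_ite_of_adj_of_adj (graphJoin_adj_inl_inr G H a b)
    (graphJoin_adj_inr_inl G H a' b)

open Classical in
theorem graphJoin_dist_inr_inr [Nonempty α] (b b' : β) :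
    (graphJoin G H).dist (.inr b) (.inr b') =
      if b = b' then 0 else if H.Adj b b' then 1 else 2 := by
  let a : α := Classical.arbitrary α
  simpa using SimpleGraph.dist_eq_ite_of_adj_of_adj (graphJoin_adj_inr_inl G H a b)
    (graphJoin_adj_inl_inr G H a b')

end graphJoin

abbrev npOneGraph (m : ℕ) : SimpleGraph (Fin 2 ⊕ (Fin m ⊕ Fin 2)) :=
  graphJoin ⊤ ((⊤ : SimpleGraph (Fin m)) ⊕g (⊥ : SimpleGraph (Fin 2)))

def npOneTestVector (m : ℕ) : Fin 2 ⊕ (Fin m ⊕ Fin 2) → ℝ :=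
  Sum.elim 1 (Sum.elim 1 fun _ ↦ 5 / 4)

theorem npOneTestVector_dotProduct_self (m : ℕ) :
    npOneTestVector m ⬝ᵥ npOneTestVector m = m + 41 / 8 := by
  simp only [dotProduct, npOneTestVector, Fintype.sum_sum_type, Sum.elim_inl, Sum.elim_inr,
    Pi.one_apply, mul_one, sum_const, card_univ, Fintype.card_fin, nsmul_eq_mul, Nat.cast_ofNat]
  ring

theorem npOneTestVector_dotProduct_distMatrix_mulVec (m : ℕ) :
    npOneTestVector m ⬝ᵥ distMatrix (npOneGraph m) *ᵥ npOneTestVector m =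
      m ^ 2 + 13 * m + 73 / 4 := by
  have hoff (i : Fin m) :
      ∑ j : Fin m, (if i = j then 0 else if i = j then 2 else 1 : ℝ) = m - 1 := by
    have h (j : Fin m) : (if i = j then 0 else if i = j then (2 : ℝ) else 1) =
        1 - if i = j then 1 else 0 := by
      split_ifs <;> norm_num
    simp [h, Finset.sum_sub_distrib]
  simp only [dotProduct, npOneTestVector, mulVec, distMatrix, Fintype.sum_sum_type, Sum.elim_inl,
    Sum.elim_inr, Pi.one_apply, mul_one, one_mul, Fin.sum_univ_two, Fin.isValue,
    graphJoin_dist_inl_inl, graphJoin_dist_inr_inr, graphJoin_dist_inl_inr, graphJoin_dist_inr_inl,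
    top_adj, sum_adj, bot_adj, ne_eq, ite_not, Nat.cast_ite, CharP.cast_eq_zero, Nat.cast_ofNat,
    Nat.cast_one, sum_const, card_univ, Fintype.card_fin, nsmul_eq_mul, ↓reduceIte, zero_ne_one,
    zero_add, one_ne_zero, add_zero, ite_mul, zero_mul, Sum.inl.injEq, Sum.inr.injEq, hoff,
    reduceCtorEq, smul_add]
  ring

theorem add_seven_sub_fourteen_div_mul_lt (m : ℝ) (hm : -4 < m) :
    (m + 4 + 3 - 14 / (m + 4)) * (m + 41 / 8) < m ^ 2 + 13 * m + 73 / 4 := by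
  have h4 : m + 4 ≠ 0 := by linarith
  have hgap : (m + 4 + 3 - 14 / (m + 4)) * (m + 41 / 8) =
      m ^ 2 + 13 * m + 73 / 4 - (7 / 8 * m ^ 2 - m / 8 + 5 / 4) / (m + 4) := by
    field_simp
    ring
  have hpos : 0 < (7 / 8 * m ^ 2 - m / 8 + 5 / 4) / (m + 4) :=
    div_pos (by nlinarith [sq_nonneg (m - 1 / 14)]) (by linarith)
  linarith

/-- For `n ≥ 5`, `ρ(K₂∨(K_{n−4}+2K₁)) > n + 3 − 14/n`. -/
theorem distSpectralRadius_NP1 (n : ℕ) (h5 : 5 ≤ n) :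
    distSpectralRadius (graphJoin (⊤ : SimpleGraph (Fin 2))
        ((⊤ : SimpleGraph (Fin (n - 4))) ⊕g (⊥ : SimpleGraph (Fin 2)))) >
      (n : ℝ) + 3 - 14 / n := by
  obtain ⟨m, rfl⟩ : ∃ m, n = m + 4 := ⟨n - 4, by omega⟩
  have hρ := (isHermitian_distMatrix (npOneGraph m)).dotProduct_mulVec_le_sSup_spectrum_mul
    (npOneTestVector m)
  rw [npOneTestVector_dotProduct_distMatrix_mulVec, npOneTestVector_dotProduct_self] at hρ
  change _ < distSpectralRadius (npOneGraph m)
  rw [← mul_lt_mul_iff_of_pos_right (by positivity : (0 : ℝ) < m + 41 / 8)]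
  push_cast
  exact (add_seven_sub_fourteen_div_mul_lt m (by linarith [m.cast_nonneg (α := ℝ)])).trans_le hρ
end
end

section
/- For every n ≥ 5, the Harary spectral radius of the complement of K₂∨(K_{n−4}+2K₁) equals (n − 3 + √(n² + 18n − 79))/4, and this value is strictly greater than (5n² − 23n + 28)/(n(n − 1)). -/
open Finset SimpleGraph

noncomputable section

/-! The complement of `K₂ ∨ (K_{n-4} + 2K₁)` is `K₂ ∨ \bar K_{n-4}` plus two isolated vertices,
and the partition into isolated vertices, the independent set and the clique is equitable for its
(nonnegative) Harary matrix. With `λ` the larger root of `2λ² - (n - 3)λ - (3n - 11)`, the vector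
`(0, λ - 1, n - 4)` on the three parts is an eigenvector for `λ`, while the positive vector
`(1, λ - 1, n - 4)` satisfies `H x ≤ λ x`, so by the Collatz–Wielandt bound no eigenvalue exceeds
`λ`. The inequality follows from `√(n² + 18n - 79) ≥ n + 1`. -/

open scoped Matrix

namespace SimpleGraph

variable {V : Type*} (G : SimpleGraph V)

theorem dist_eq_zero_of_forall_not_adj {u : V} (hu : ∀ w, ¬G.Adj u w) (v : V) :
    G.dist u v = 0 := by
  by_cases h : G.Reachable u v
  · obtain ⟨p⟩ := h
    cases p with
    | nil => exact dist_self
    | cons h _ => exact absurd h (hu _)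
  · exact dist_eq_zero_of_not_reachable h

end SimpleGraph

/-- The side conditions in `hararyMatrix` are redundant: `SimpleGraph.dist` is `0` on the
diagonal and between components, and `0⁻¹ = 0`. -/
theorem hararyMatrix_apply {V : Type*} [Fintype V] (G : SimpleGraph V) (u v : V) :
    hararyMatrix G u v = ((G.dist u v : ℝ))⁻¹ := by
  unfold hararyMatrix
  split_ifs with h
  · rfl
  · rw [not_and_or, not_not] at h
    rcases h with rfl | h
    · simp
    · simp [SimpleGraph.dist_eq_zero_of_not_reachable h]

theorem hararyMatrix_nonneg {V : Type*} [Fintype V] (G : SimpleGraph V) (u v : V) :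
    0 ≤ hararyMatrix G u v := by
  rw [hararyMatrix_apply]
  positivity

theorem Fintype.sum_ite_eq_zero_else {ι R : Type*} [Fintype ι] [DecidableEq ι] [CommRing R]
    (i : ι) (c : R) : ∑ j, (if i = j then 0 else c) = ((Fintype.card ι : R) - 1) * c := by
  have h : ∀ j, (if i = j then 0 else c) = c - if i = j then c else 0 := fun j => by
    split_ifs <;> ring
  simp only [h, Finset.sum_sub_distrib, Finset.sum_const, Finset.sum_ite_eq, Finset.mem_univ,
    if_true, Finset.card_univ, nsmul_eq_mul]
  ring

namespace Matrix

variable {ι : Type*} [Fintype ι] [DecidableEq ι]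

theorem mem_spectrum_of_mulVec_eq_smul {A : Matrix ι ι ℝ} {r : ℝ} {y : ι → ℝ} (hy : y ≠ 0)
    (hAy : A *ᵥ y = r • y) : r ∈ spectrum ℝ A := by
  rw [← spectrum_toLin']
  exact Module.End.HasEigenvalue.mem_spectrum
    (Module.End.hasEigenvalue_of_hasEigenvector ⟨Module.End.mem_eigenspace_iff.mpr hAy, hy⟩)

theorem exists_mulVec_eq_smul_of_mem_spectrum {A : Matrix ι ι ℝ} {μ : ℝ}
    (hμ : μ ∈ spectrum ℝ A) : ∃ y ≠ 0, A *ᵥ y = μ • y := by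
  rw [← spectrum_toLin', ← Module.End.hasEigenvalue_iff_mem_spectrum] at hμ
  obtain ⟨y, hy, hy0⟩ := hμ.exists_hasEigenvector
  exact ⟨y, hy0, Module.End.mem_eigenspace_iff.mp hy⟩

/-- Collatz–Wielandt: compare an eigenvector `y` with `x` at an index maximising
`|y i| / x i`. -/
theorem abs_le_of_mem_spectrum_of_mulVec_le {A : Matrix ι ι ℝ} (hA : ∀ i j, 0 ≤ A i j)
    {x : ι → ℝ} (hx : ∀ i, 0 < x i) {r : ℝ} (hAx : ∀ i, (A *ᵥ x) i ≤ r * x i)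
    {μ : ℝ} (hμ : μ ∈ spectrum ℝ A) : |μ| ≤ r := by
  obtain ⟨y, hy0, hAy⟩ := exists_mulVec_eq_smul_of_mem_spectrum hμ
  obtain ⟨j, hj⟩ := Function.ne_iff.mp hy0
  obtain ⟨k, -, hk⟩ :=
    Finset.exists_max_image Finset.univ (fun i => |y i| / x i) ⟨j, Finset.mem_univ j⟩
  set c := |y k| / x k
  have hyc : ∀ i, |y i| ≤ c * x i := fun i =>
    (div_le_iff₀ (hx i)).mp (hk i (Finset.mem_univ i))
  have hc : 0 < c := (div_pos (abs_pos.mpr hj) (hx j)).trans_le (hk j (Finset.mem_univ j))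
  have hyk : |y k| = c * x k := by
    simp only [c]
    field_simp [(hx k).ne']
  have key : |μ| * |y k| ≤ r * |y k| := calc
    |μ| * |y k| = |(A *ᵥ y) k| := by rw [hAy, Pi.smul_apply, smul_eq_mul, abs_mul]
    _ ≤ ∑ i, A k i * |y i| := by
      simp only [mulVec, dotProduct]
      refine (Finset.abs_sum_le_sum_abs _ _).trans_eq (Finset.sum_congr rfl fun i _ => ?_)
      rw [abs_mul, abs_of_nonneg (hA k i)]
    _ ≤ ∑ i, A k i * (c * x i) :=
      Finset.sum_le_sum fun i _ => mul_le_mul_of_nonneg_left (hyc i) (hA k i)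
    _ = c * (A *ᵥ x) k := by
      simp only [mulVec, dotProduct, Finset.mul_sum]
      exact Finset.sum_congr rfl fun i _ => by ring
    _ ≤ c * (r * x k) := mul_le_mul_of_nonneg_left (hAx k) hc.le
    _ = r * |y k| := by rw [hyk]; ring
  exact le_of_mul_le_mul_right key (by rw [hyk]; exact mul_pos hc (hx k))

theorem sSup_spectrum_eq_of_mulVec {A : Matrix ι ι ℝ} (hA : ∀ i j, 0 ≤ A i j) {r : ℝ}
    {x : ι → ℝ} (hx : ∀ i, 0 < x i) (hAx : ∀ i, (A *ᵥ x) i ≤ r * x i)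
    {y : ι → ℝ} (hy : y ≠ 0) (hAy : A *ᵥ y = r • y) : sSup (spectrum ℝ A) = r :=
  IsGreatest.csSup_eq ⟨mem_spectrum_of_mulVec_eq_smul hy hAy,
    fun _ hμ => (le_abs_self _).trans (abs_le_of_mem_spectrum_of_mulVec_le hA hx hAx hμ)⟩

end Matrix

/-- The complement of `K_α ∨ (K_β + \bar K_γ)`: the vertices of `α` are isolated, those of `β`
are independent, those of `γ` form a clique, and every vertex of `β` is adjacent to every
vertex of `γ`. -/
def cliqueJoinSumCompl (α β γ : Type*) : SimpleGraph (α ⊕ (β ⊕ γ)) :=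
  (graphJoin (⊤ : SimpleGraph α) ((⊤ : SimpleGraph β) ⊕g (⊥ : SimpleGraph γ)))ᶜ

namespace cliqueJoinSumCompl

variable {α β γ : Type*}

theorem not_adj_isolated (a : α) (v : α ⊕ (β ⊕ γ)) :
    ¬(cliqueJoinSumCompl α β γ).Adj (.inl a) v := by
  rcases v with a' | v <;> simp [cliqueJoinSumCompl, graphJoin]

theorem not_adj_indep_indep (b b' : β) :
    ¬(cliqueJoinSumCompl α β γ).Adj (.inr (.inl b)) (.inr (.inl b')) := by
  simp [cliqueJoinSumCompl, graphJoin]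

theorem adj_indep_clique (b : β) (c : γ) :
    (cliqueJoinSumCompl α β γ).Adj (.inr (.inl b)) (.inr (.inr c)) := by
  simp [cliqueJoinSumCompl, graphJoin]

theorem adj_clique_clique {c c' : γ} (h : c ≠ c') :
    (cliqueJoinSumCompl α β γ).Adj (.inr (.inr c)) (.inr (.inr c')) := by
  simp [cliqueJoinSumCompl, graphJoin, h]

theorem dist_isolated_left (a : α) (v : α ⊕ (β ⊕ γ)) :
    (cliqueJoinSumCompl α β γ).dist (.inl a) v = 0 :=
  SimpleGraph.dist_eq_zero_of_forall_not_adj _ (not_adj_isolated a) v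

theorem dist_isolated_right (v : α ⊕ (β ⊕ γ)) (a : α) :
    (cliqueJoinSumCompl α β γ).dist v (.inl a) = 0 := by
  rw [SimpleGraph.dist_comm, dist_isolated_left]

theorem dist_indep_clique (b : β) (c : γ) :
    (cliqueJoinSumCompl α β γ).dist (.inr (.inl b)) (.inr (.inr c)) = 1 :=
  SimpleGraph.dist_eq_one_iff_adj.mpr (adj_indep_clique b c)

theorem dist_clique_indep (c : γ) (b : β) :
    (cliqueJoinSumCompl α β γ).dist (.inr (.inr c)) (.inr (.inl b)) = 1 :=
  SimpleGraph.dist_eq_one_iff_adj.mpr (adj_indep_clique b c).symm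

theorem dist_clique_clique [DecidableEq γ] (c c' : γ) :
    (cliqueJoinSumCompl α β γ).dist (.inr (.inr c)) (.inr (.inr c')) =
      if c = c' then 0 else 1 := by
  split_ifs with h
  · rw [h, SimpleGraph.dist_self]
  · exact SimpleGraph.dist_eq_one_iff_adj.mpr (adj_clique_clique h)

theorem dist_indep_indep [DecidableEq β] [Nonempty γ] (b b' : β) :
    (cliqueJoinSumCompl α β γ).dist (.inr (.inl b)) (.inr (.inl b')) =
      if b = b' then 0 else 2 := by
  split_ifs with h
  · rw [h, SimpleGraph.dist_self]
  · obtain ⟨c⟩ := ‹Nonempty γ›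
    let w := (adj_indep_clique (α := α) b c).toWalk.append (adj_indep_clique b' c).symm.toWalk
    have hle : (cliqueJoinSumCompl α β γ).dist (.inr (.inl b)) (.inr (.inl b')) ≤ 2 :=
      SimpleGraph.dist_le w
    have hlt := w.reachable.one_lt_dist_of_ne_of_not_adj (by simpa using h)
      (not_adj_indep_indep b b')
    omega

/-- The partition into `α`, `β`, `γ` is equitable for the Harary matrix, with quotient matrix
`!![0, 0, 0; 0, (|β| - 1)/2, |γ|; 0, |β|, |γ| - 1]`. -/
theorem hararyMatrix_mulVec [Fintype α] [Fintype β] [Fintype γ] [DecidableEq β] [DecidableEq γ]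
    [Nonempty γ] (p q s : ℝ) :
    hararyMatrix (cliqueJoinSumCompl α β γ) *ᵥ
        Sum.elim (fun _ => p) (Sum.elim (fun _ => q) (fun _ => s)) =
      Sum.elim (0 : α → ℝ)
        (Sum.elim (fun _ => ((Fintype.card β : ℝ) - 1) / 2 * q + Fintype.card γ * s)
          (fun _ => Fintype.card β * q + ((Fintype.card γ : ℝ) - 1) * s)) := by
  ext (a | b | c) <;>
    simp [Matrix.mulVec, dotProduct, Fintype.sum_sum_type, hararyMatrix_apply,
      dist_isolated_left, dist_isolated_right, dist_indep_indep, dist_indep_clique,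
      dist_clique_indep, dist_clique_clique, apply_ite (·⁻¹), ite_mul, Fintype.sum_ite_eq_zero_else]
  ring

end cliqueJoinSumCompl

theorem hararySpectralRadius_cliqueJoinSumCompl {α β γ : Type*} [Fintype α] [Fintype β]
    [Fintype γ] [DecidableEq α] [DecidableEq β] [DecidableEq γ] [Nonempty γ] {r q s : ℝ}
    (hq : 0 < q) (hs : 0 < s)
    (hβ : ((Fintype.card β : ℝ) - 1) / 2 * q + Fintype.card γ * s = r * q)
    (hγ : Fintype.card β * q + ((Fintype.card γ : ℝ) - 1) * s = r * s) :
    hararySpectralRadius (cliqueJoinSumCompl α β γ) = r := by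
  have hr : 0 ≤ r := by
    have : (1 : ℝ) ≤ Fintype.card γ := by exact_mod_cast Fintype.card_pos
    nlinarith
  refine Matrix.sSup_spectrum_eq_of_mulVec (hararyMatrix_nonneg _)
    (x := Sum.elim (fun _ => 1) (Sum.elim (fun _ => q) (fun _ => s))) ?_ ?_
    (y := Sum.elim (fun _ => 0) (Sum.elim (fun _ => q) (fun _ => s))) ?_ ?_
  · rintro (a | b | c) <;> simp [hq, hs]
  · rintro (a | b | c) <;> simp [cliqueJoinSumCompl.hararyMatrix_mulVec, hβ, hγ, hr]
  · obtain ⟨c⟩ := ‹Nonempty γ›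
    intro h
    simpa [hs.ne'] using congrFun h (.inr (.inr c))
  · rw [cliqueJoinSumCompl.hararyMatrix_mulVec]
    ext (a | b | c) <;> simp [hβ, hγ]

theorem add_one_le_sqrt_of_five_le {x : ℝ} (hx : 5 ≤ x) : x + 1 ≤ √(x ^ 2 + 18 * x - 79) :=
  Real.le_sqrt_of_sq_le (by nlinarith)

theorem div_lt_root_of_five_le {x : ℝ} (hx : 5 ≤ x) :
    (5 * x ^ 2 - 23 * x + 28) / (x * (x - 1)) < (x - 3 + √(x ^ 2 + 18 * x - 79)) / 4 := by
  have hpos : 0 < x * (x - 1) := by nlinarith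
  rw [div_lt_iff₀ hpos]
  have ht : 0 ≤ x - 5 := by linarith
  calc 5 * x ^ 2 - 23 * x + 28 < (2 * x - 2) / 4 * (x * (x - 1)) := by
        nlinarith [mul_nonneg (mul_nonneg ht ht) ht, mul_nonneg ht ht]
    _ ≤ (x - 3 + √(x ^ 2 + 18 * x - 79)) / 4 * (x * (x - 1)) := by
        gcongr
        linarith [add_one_le_sqrt_of_five_le hx]

/-- For `n ≥ 5`, the Harary spectral radius of the complement of
`K₂∨(K_{n−4}+2K₁)` equals `(n − 3 + √(n² + 18n − 79))/4`, which is strictly greater than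
`(5n² − 23n + 28)/(n(n − 1))`. -/
theorem hararySpectralRadius_compl_NP1 (n : ℕ) (h5 : 5 ≤ n) :
    hararySpectralRadius ((graphJoin (⊤ : SimpleGraph (Fin 2))
        ((⊤ : SimpleGraph (Fin (n - 4))) ⊕g (⊥ : SimpleGraph (Fin 2))))ᶜ) =
      ((n : ℝ) - 3 + Real.sqrt ((n : ℝ) ^ 2 + 18 * n - 79)) / 4 ∧
    ((n : ℝ) - 3 + Real.sqrt ((n : ℝ) ^ 2 + 18 * n - 79)) / 4 >
      (5 * (n : ℝ) ^ 2 - 23 * n + 28) / ((n : ℝ) * ((n : ℝ) - 1)) := by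
  have hn : (5 : ℝ) ≤ n := by exact_mod_cast h5
  have hm : ((n - 4 : ℕ) : ℝ) = n - 4 := by rw [Nat.cast_sub (by omega)]; norm_num
  have hsqrt := add_one_le_sqrt_of_five_le hn
  have hsq := Real.sq_sqrt (by nlinarith : (0 : ℝ) ≤ n ^ 2 + 18 * n - 79)
  refine ⟨?_, div_lt_root_of_five_le hn⟩
  apply hararySpectralRadius_cliqueJoinSumCompl
    (q := ((n : ℝ) - 3 + √((n : ℝ) ^ 2 + 18 * n - 79)) / 4 - 1) (s := n - 4)
  · linarith
  · linarith
  · simp only [Fintype.card_fin, hm]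
    linear_combination (-1 / 16 : ℝ) * hsq
  · simp only [Fintype.card_fin, hm]
    ring
end
end
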